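/- Let U ⊂ V be finely open, u ∈ N^{1,p}(U) extended by zero to V \ U, and suppose u is measurable, finite q.e., and u∘γ is continuous for p-almost every curve γ : [0, l_γ] → V. Then u ∈ N^{1,p}(V), with any p-weak upper gradient g ∈ L^p(U) of u in U, extended by zero, serving as a p-weak upper gradient of u in V. -/

import Mathlib

open MeasureTheory Metric Set Filter ENNReal

noncomputable section

variable {X : Type*} [MetricSpace X] [MeasurableSpace X] [BorelSpace X]

/-- A nonconstant compact rectifiable curve, parameterized by arc length
(modelled as a `1`-Lipschitz map on `[0, len]`). -/
structure Curve (X : Type*) [MetricSpace X] where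
  len : ℝ
  len_pos : 0 < len
  toFun : ℝ → X
  lip : LipschitzOnWith 1 toFun (Set.Icc 0 len)

/-- The curve lies in the set `E`. -/
def Curve.InSet (γ : Curve X) (E : Set X) : Prop :=
  ∀ t ∈ Set.Icc (0 : ℝ) γ.len, γ.toFun t ∈ E

/-- Line integral (w.r.t. arc length) of a nonnegative function along a curve. -/
def curveLint (γ : Curve X) (g : X → ℝ≥0∞) : ℝ≥0∞ :=
  ∫⁻ t in Set.Icc (0 : ℝ) γ.len, g (γ.toFun t)

/-- The `p`-modulus of a family of curves. -/
def pMod (μ : Measure X) (p : ℝ) (Γ : Set (Curve X)) : ℝ≥0∞ :=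
  ⨅ (ρ : X → ℝ≥0∞) (_ : Measurable ρ) (_ : ∀ γ ∈ Γ, 1 ≤ curveLint γ ρ),
    ∫⁻ x, ρ x ^ p ∂μ

/-- A property holds for `p`-almost every curve. -/
def AECurve (μ : Measure X) (p : ℝ) (P : Curve X → Prop) : Prop :=
  pMod μ p {γ | ¬ P γ} = 0

/-- `g` is a `p`-weak upper gradient of `f` on `E`. -/
def IsWeakUpperGradientOn (μ : Measure X) (p : ℝ) (f : X → ℝ) (g : X → ℝ≥0∞)
    (E : Set X) : Prop :=
  AECurve (μ.restrict E) p fun γ =>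
    γ.InSet E → edist (f (γ.toFun 0)) (f (γ.toFun γ.len)) ≤ curveLint γ g

/-- The Newtonian `p`-energy `∫_E |f|^p dμ + inf_g ∫_E g^p dμ`,
the `p`-th power of the Newtonian norm. -/
def npEnergy (μ : Measure X) (p : ℝ) (f : X → ℝ) (E : Set X) : ℝ≥0∞ :=
  (∫⁻ x in E, ENNReal.ofReal |f x| ^ p ∂μ) +
    ⨅ (g : X → ℝ≥0∞) (_ : Measurable g) (_ : IsWeakUpperGradientOn μ p f g E),
      ∫⁻ x in E, g x ^ p ∂μ

/-- The Newtonian norm `‖f‖_{N^{1,p}(E)}`. -/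
def npNorm (μ : Measure X) (p : ℝ) (f : X → ℝ) (E : Set X) : ℝ≥0∞ :=
  npEnergy μ p f E ^ (1 / p)

/-- Membership in the Newtonian space `N^{1,p}(E)`. -/
def MemNp (μ : Measure X) (p : ℝ) (f : X → ℝ) (E : Set X) : Prop :=
  Measurable f ∧ npEnergy μ p f E < ⊤

/-- The Sobolev capacity `C_p(E)`. -/
def sobolevCap (μ : Measure X) (p : ℝ) (E : Set X) : ℝ≥0∞ :=
  ⨅ (f : X → ℝ) (_ : MemNp μ p f Set.univ) (_ : ∀ x ∈ E, 1 ≤ f x),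
    npEnergy μ p f Set.univ

/-- `f ∈ N^{1,p}_0(A)`: a global Newtonian function vanishing outside `A`. -/
def MemNp0 (μ : Measure X) (p : ℝ) (f : X → ℝ) (A : Set X) : Prop :=
  MemNp μ p f Set.univ ∧ ∀ x ∉ A, f x = 0

/-- The variational capacity `cap_p(E, A)`. -/
def varCap (μ : Measure X) (p : ℝ) (E A : Set X) : ℝ≥0∞ :=
  ⨅ (f : X → ℝ) (_ : MemNp0 μ p f A) (_ : ∀ x ∈ E, 1 ≤ f x)
    (g : X → ℝ≥0∞) (_ : Measurable g)
    (_ : IsWeakUpperGradientOn μ p f g Set.univ),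
    ∫⁻ x, g x ^ p ∂μ

/-- The Wiener-type integrand in the definition of thinness, with the
convention that it equals `1` when `cap_p(B(x,r), B(x,2r)) = 0`. -/
def thinIntegrand (μ : Measure X) (p : ℝ) (E : Set X) (x : X) (r : ℝ) : ℝ≥0∞ :=
  if varCap μ p (ball x r) (ball x (2 * r)) = 0 then 1
  else (varCap μ p (E ∩ ball x r) (ball x (2 * r)) /
        varCap μ p (ball x r) (ball x (2 * r))) ^ (1 / (p - 1))

/-- `E` is thin at `x`:
`∫_0^1 (cap_p(E∩B(x,r),B(x,2r))/cap_p(B(x,r),B(x,2r)))^{1/(p-1)} dr/r < ∞`. -/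
def Thin (μ : Measure X) (p : ℝ) (E : Set X) (x : X) : Prop :=
  ∫⁻ r in Set.Ioo (0 : ℝ) 1, thinIntegrand μ p E x r / ENNReal.ofReal r < ⊤

/-- A set is finely open if its complement is thin at each of its points. -/
def FinelyOpen (μ : Measure X) (p : ℝ) (V : Set X) : Prop :=
  ∀ x ∈ V, Thin μ p Vᶜ x

/-- A set `U` is quasiopen if for every `ε > 0` there is an open set `G`
with `C_p(G) < ε` such that `G ∪ U` is open. -/
def Quasiopen (μ : Measure X) (p : ℝ) (U : Set X) : Prop :=
  ∀ ε : ℝ≥0∞, 0 < ε → ∃ G : Set X, IsOpen G ∧ sobolevCap μ p G < ε ∧ IsOpen (G ∪ U)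

/-- The fine topology: the topology generated by the finely open sets. -/
def fineTopology (μ : Measure X) (p : ℝ) : TopologicalSpace X :=
  TopologicalSpace.generateFrom {V | FinelyOpen μ p V}

/-- `A` is a `p`-strict subset of `E`. -/
def PStrictSubset (μ : Measure X) (p : ℝ) (A E : Set X) : Prop :=
  A ⊆ E ∧ ∃ η : X → ℝ, MemNp0 μ p η E ∧ ∀ x ∈ A, η x = 1

/-- `V` is a finely open `p`-strict subset of `U` with compact closure
contained in `U` (written `V ⋐ U`). -/
def GoodSubset (μ : Measure X) (p : ℝ) (V U : Set X) : Prop :=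
  FinelyOpen μ p V ∧ PStrictSubset μ p V U ∧ IsCompact (closure V) ∧ closure V ⊆ U

/-- The fine local Newtonian space `N^{1,p}_{fine-loc}(U)`. -/
def MemNpFineLoc (μ : Measure X) (p : ℝ) (f : X → ℝ) (U : Set X) : Prop :=
  ∀ V : Set X, GoodSubset μ p V U → MemNp μ p f V

/-- The local Newtonian space `N^{1,p}_loc(G)`. -/
def MemNpLoc (μ : Measure X) (p : ℝ) (f : X → ℝ) (G : Set X) : Prop :=
  ∀ x ∈ G, ∃ r : ℝ, 0 < r ∧ MemNp μ p f (ball x r ∩ G)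

/-- `∫_S g_u^p dμ`, where `g_u` is the minimal `p`-weak upper gradient of `u`
taken with respect to `U`, expressed as the infimum of the energies of all
`p`-weak upper gradients of `u` on `U`. -/
def fineEnergy (μ : Measure X) (p : ℝ) (u : X → ℝ) (U S : Set X) : ℝ≥0∞ :=
  ⨅ (g : X → ℝ≥0∞) (_ : Measurable g) (_ : IsWeakUpperGradientOn μ p u g U),
    ∫⁻ x in S, g x ^ p ∂μ

/-- `u` is a fine superminimizer in `U`. -/
def FineSuperminimizer (μ : Measure X) (p : ℝ) (u : X → ℝ) (U : Set X) : Prop :=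
  MemNpFineLoc μ p u U ∧
    ∀ V : Set X, GoodSubset μ p V U →
      ∀ φ : X → ℝ, MemNp0 μ p φ V → (∀ x, 0 ≤ φ x) →
        fineEnergy μ p u U V ≤ fineEnergy μ p (fun x => u x + φ x) U V

/-- `u` is a fine minimizer in `U`. -/
def FineMinimizer (μ : Measure X) (p : ℝ) (u : X → ℝ) (U : Set X) : Prop :=
  MemNpFineLoc μ p u U ∧
    ∀ V : Set X, GoodSubset μ p V U →
      ∀ φ : X → ℝ, MemNp0 μ p φ V →
        fineEnergy μ p u U V ≤ fineEnergy μ p (fun x => u x + φ x) U V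

/-- `u` is a fine subminimizer in `U` if `-u` is a fine superminimizer. -/
def FineSubminimizer (μ : Measure X) (p : ℝ) (u : X → ℝ) (U : Set X) : Prop :=
  FineSuperminimizer μ p (fun x => -u x) U

/-- A doubling measure which is positive and finite on balls. -/
def DoublingMeasure (μ : Measure X) : Prop :=
  (∀ (x : X) (r : ℝ), 0 < r → 0 < μ (ball x r) ∧ μ (ball x r) < ⊤) ∧
    ∃ C : ℝ≥0∞, C < ⊤ ∧
      ∀ (x : X) (r : ℝ), 0 < r → μ (ball x (2 * r)) ≤ C * μ (ball x r)

/-- `X` supports a `p`-Poincaré inequality. -/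
def PoincareInequality (μ : Measure X) (p : ℝ) : Prop :=
  ∃ C : ℝ≥0∞, 0 < C ∧ ∃ lam : ℝ, 1 ≤ lam ∧
    ∀ (x : X) (r : ℝ), 0 < r → ∀ (f : X → ℝ) (g : X → ℝ≥0∞),
      Measurable f → Measurable g → IsWeakUpperGradientOn μ p f g Set.univ →
      (μ (ball x r))⁻¹ *
          ∫⁻ y in ball x r, ENNReal.ofReal |f y - ⨍ z in ball x r, f z ∂μ| ∂μ ≤
        C * ENNReal.ofReal (2 * r) *
          ((μ (ball x (lam * r)))⁻¹ * ∫⁻ y in ball x (lam * r), g y ^ p ∂μ) ^ (1 / p)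

/-! Let `γ` be a curve in `V` along which `u` is continuous, and let `a ≤ b` be the first and
last times at which `γ` is outside `U`. Since `u = 0` on `V \ U`, continuity gives
`u (γ a) = u (γ b) = 0`. On `[0, a)` and `(b, len]` the curve runs inside `U`, so the upper
gradient inequality for `g` holds on every closed subinterval there and passes to `[0, a]` and
`[b, len]` by continuity. The curves along which this fails are those on which `u` is
discontinuous or which have a subcurve in `U` that is exceptional for `g`; both families have
`p`-modulus zero, the second because curves in `U` only see `μ` on (a measurable hull of) `U`.
Finally `|u|` and the extended gradient vanish off `U`, so their `p`-th powers integrate over `V`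
to at most their integrals over `U`. -/

section Curves

variable {X : Type*} [MetricSpace X]

def Curve.restrictIcc (γ : Curve X) (a b : ℝ) (h0 : 0 ≤ a) (hab : a < b) (hb : b ≤ γ.len) :
    Curve X where
  len := b - a
  len_pos := sub_pos.2 hab
  toFun s := γ.toFun (a + s)
  lip := by
    intro s hs t ht
    have hs' : a + s ∈ Icc 0 γ.len := ⟨by linarith [hs.1], by linarith [hs.2]⟩
    have ht' : a + t ∈ Icc 0 γ.len := ⟨by linarith [ht.1], by linarith [ht.2]⟩
    simpa only [edist_add_left] using γ.lip hs' ht'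

namespace Curve

variable (γ : Curve X) {a b : ℝ} (h0 : 0 ≤ a) (hab : a < b) (hb : b ≤ γ.len)

@[simp]
theorem restrictIcc_toFun_zero : (γ.restrictIcc a b h0 hab hb).toFun 0 = γ.toFun a := by
  simp [restrictIcc]

@[simp]
theorem restrictIcc_toFun_len :
    (γ.restrictIcc a b h0 hab hb).toFun (γ.restrictIcc a b h0 hab hb).len = γ.toFun b := by
  simp [restrictIcc]

@[simp]
theorem inSet_restrictIcc {E : Set X} :
    (γ.restrictIcc a b h0 hab hb).InSet E ↔ ∀ t ∈ Icc a b, γ.toFun t ∈ E := by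
  have h : Icc a b = (a + ·) '' Icc 0 (b - a) := by
    rw [image_const_add_Icc, add_zero, add_sub_cancel]
  rw [h, forall_mem_image]
  rfl

@[simp]
theorem curveLint_restrictIcc (ρ : X → ℝ≥0∞) :
    curveLint (γ.restrictIcc a b h0 hab hb) ρ = ∫⁻ t in Icc a b, ρ (γ.toFun t) := by
  have h := (measurePreserving_add_left volume a).setLIntegral_comp_emb
    (measurableEmbedding_addLeft a) (fun t => ρ (γ.toFun t)) (Icc 0 (b - a))
  rwa [image_const_add_Icc, add_zero, add_sub_cancel] at h

theorem curveLint_restrictIcc_le (ρ : X → ℝ≥0∞) :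
    curveLint (γ.restrictIcc a b h0 hab hb) ρ ≤ curveLint γ ρ := by
  rw [curveLint_restrictIcc]
  exact lintegral_mono_set (Icc_subset_Icc h0 hb)

end Curve

end Curves

section Measure

variable {X : Type*} [MeasurableSpace X] {μ : Measure X} [SFinite μ] {p : ℝ}

theorem lintegral_indicator_toMeasurable_rpow (hp : 0 < p) (U : Set X)
    (f : X → ℝ≥0∞) :
    ∫⁻ x, (toMeasurable μ U).indicator f x ^ p ∂μ = ∫⁻ x in U, f x ^ p ∂μ := by
  have h : ∀ x, (toMeasurable μ U).indicator f x ^ p = (toMeasurable μ U).indicator (f · ^ p) x :=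
    fun x => by by_cases hx : x ∈ toMeasurable μ U <;> simp [hx, ENNReal.zero_rpow_of_pos hp]
  simp_rw [h, lintegral_indicator (measurableSet_toMeasurable μ U),
    Measure.restrict_toMeasurable_of_sFinite]

theorem setLIntegral_rpow_le_of_eq_zero_off (hp : 0 < p) {U V : Set X} {f : X → ℝ≥0∞}
    (hfm : Measurable f) (hf : ∀ x ∈ V \ U, f x = 0) :
    ∫⁻ x in V, f x ^ p ∂μ ≤ ∫⁻ x in U, f x ^ p ∂μ := by
  rw [← lintegral_indicator_toMeasurable_rpow hp U]
  refine (setLIntegral_mono ((hfm.indicator (measurableSet_toMeasurable μ U)).pow_const p)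
    fun x hx => ?_).trans (setLIntegral_le_lintegral V _)
  by_cases hxU : x ∈ toMeasurable μ U
  · rw [indicator_of_mem hxU]
  · rw [hf x ⟨hx, fun h => hxU (subset_toMeasurable μ U h)⟩, ENNReal.zero_rpow_of_pos hp]
    exact zero_le

end Measure

section Modulus

variable {X : Type*} [MetricSpace X] [MeasurableSpace X] {μ ν : Measure X} {p : ℝ}
  {Γ Γ' : Set (Curve X)}

theorem pMod_le_of_admissible {ρ : X → ℝ≥0∞} (hρ : Measurable ρ)
    (hadm : ∀ γ ∈ Γ, 1 ≤ curveLint γ ρ) : pMod μ p Γ ≤ ∫⁻ x, ρ x ^ p ∂μ :=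
  (iInf_le _ ρ).trans <| (iInf_le _ hρ).trans <| iInf_le _ hadm

theorem pMod_le_of_forall_exists_curveLint_le
    (h : ∀ γ ∈ Γ, ∃ δ ∈ Γ', ∀ ρ, curveLint δ ρ ≤ curveLint γ ρ) : pMod μ p Γ ≤ pMod μ p Γ' :=
  le_iInf fun ρ => le_iInf fun hρ => le_iInf fun hadm => pMod_le_of_admissible hρ fun γ hγ => by
    obtain ⟨δ, hδ, hle⟩ := h γ hγ
    exact (hadm δ hδ).trans (hle ρ)

theorem pMod_mono (h : Γ ⊆ Γ') : pMod μ p Γ ≤ pMod μ p Γ' :=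
  pMod_le_of_forall_exists_curveLint_le fun γ hγ => ⟨γ, h hγ, fun _ => le_rfl⟩

theorem pMod_mono_measure (h : μ ≤ ν) : pMod μ p Γ ≤ pMod ν p Γ :=
  iInf_mono fun _ => iInf_mono fun _ => iInf_mono fun _ => lintegral_mono' h le_rfl

theorem pMod_union_le : pMod μ p (Γ ∪ Γ') ≤ pMod μ p Γ + pMod μ p Γ' := by
  refine ENNReal.le_iInf_add_iInf fun ρ ρ' => ENNReal.le_iInf_add_iInf fun hρ hρ' =>
    ENNReal.le_iInf_add_iInf fun hadm hadm' => ?_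
  calc pMod μ p (Γ ∪ Γ') ≤ ∫⁻ x, (ρ x ⊔ ρ' x) ^ p ∂μ :=
        pMod_le_of_admissible (hρ.sup hρ') fun γ hγ => hγ.elim
          (fun hγ => (hadm γ hγ).trans (lintegral_mono fun _ => le_sup_left))
          (fun hγ => (hadm' γ hγ).trans (lintegral_mono fun _ => le_sup_right))
    _ ≤ ∫⁻ x, ρ x ^ p + ρ' x ^ p ∂μ := lintegral_mono fun x => by
        rcases le_total (ρ x) (ρ' x) with h | h
        · rw [sup_eq_right.2 h]; exact le_add_self
        · rw [sup_eq_left.2 h]; exact le_self_add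
    _ = ∫⁻ x, ρ x ^ p ∂μ + ∫⁻ x, ρ' x ^ p ∂μ := lintegral_add_left (hρ.pow_const p) _

theorem pMod_le_pMod_restrict [SFinite μ] (hp : 0 < p) {U : Set X}
    (hΓ : ∀ γ ∈ Γ, γ.InSet U) : pMod μ p Γ ≤ pMod (μ.restrict U) p Γ := by
  refine le_iInf fun ρ => le_iInf fun hρ => le_iInf fun hadm => ?_
  rw [← lintegral_indicator_toMeasurable_rpow hp]
  refine pMod_le_of_admissible (hρ.indicator (measurableSet_toMeasurable μ U)) fun γ hγ =>
    (hadm γ hγ).trans_eq (setLIntegral_congr_fun measurableSet_Icc fun t ht => ?_)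
  exact (indicator_of_mem (subset_toMeasurable μ U (hΓ γ hγ t ht)) ρ).symm

end Modulus

namespace AECurve

variable {X : Type*} [MetricSpace X] [MeasurableSpace X] {μ ν : Measure X} {p : ℝ}
  {P Q : Curve X → Prop}

theorem mono (hPQ : ∀ γ, P γ → Q γ) (h : AECurve μ p P) : AECurve μ p Q :=
  le_antisymm ((pMod_mono fun γ (hQ : ¬Q γ) hP => hQ (hPQ γ hP)).trans h.le) zero_le

theorem and (hP : AECurve μ p P) (hQ : AECurve μ p Q) : AECurve μ p fun γ => P γ ∧ Q γ := by
  refine le_antisymm ?_ zero_le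
  calc pMod μ p {γ | ¬(P γ ∧ Q γ)} ≤ pMod μ p ({γ | ¬P γ} ∪ {γ | ¬Q γ}) :=
        pMod_mono fun γ hγ => not_and_or.1 hγ
    _ ≤ 0 + 0 := pMod_union_le.trans (add_le_add hP.le hQ.le)
    _ = 0 := add_zero 0

theorem mono_measure (h : ν ≤ μ) (hP : AECurve μ p P) : AECurve ν p P :=
  le_antisymm ((pMod_mono_measure h).trans hP.le) zero_le

theorem of_restrict [SFinite μ] (hp : 0 < p) {U : Set X}
    (h : AECurve (μ.restrict U) p fun γ => γ.InSet U → P γ) :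
    AECurve μ p fun γ => γ.InSet U → P γ :=
  le_antisymm ((pMod_le_pMod_restrict hp fun _ hγ => (Classical.not_imp.1 hγ).1).trans h.le)
    zero_le

theorem restrictIcc (h : AECurve μ p P) :
    AECurve μ p fun γ => ∀ a b h0 hab hb, P (γ.restrictIcc a b h0 hab hb) := by
  refine le_antisymm ((pMod_le_of_forall_exists_curveLint_le fun γ hγ => ?_).trans h.le)
    zero_le
  simp only [mem_ofPred_eq, not_forall] at hγ
  obtain ⟨a, b, h0, hab, hb, hP⟩ := hγ
  exact ⟨_, hP, γ.curveLint_restrictIcc_le h0 hab hb⟩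

end AECurve

theorem IsWeakUpperGradientOn.mono {X : Type*} [MetricSpace X] [MeasurableSpace X]
    {μ : Measure X} {p : ℝ} {f : X → ℝ} {g g' : X → ℝ≥0∞} {E : Set X} (hgg' : g ≤ g')
    (h : IsWeakUpperGradientOn μ p f g E) : IsWeakUpperGradientOn μ p f g' E :=
  AECurve.mono (fun _ hγ hE => (hγ hE).trans (lintegral_mono fun _ => hgg' _)) h

section Interval

variable {E : Type*} [PseudoEMetricSpace E] {c : ℝ → E} {h : ℝ → ℝ≥0∞} {x y : ℝ}

theorem edist_le_setLIntegral_of_forall_Ioo_left (hxy : x ≤ y)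
    (hc : ContinuousWithinAt c (Ioo x y) y)
    (hbound : ∀ t ∈ Ioo x y, edist (c x) (c t) ≤ ∫⁻ s in Icc x t, h s) :
    edist (c x) (c y) ≤ ∫⁻ s in Icc x y, h s := by
  rcases hxy.eq_or_lt with rfl | hlt
  · simp
  refine ContinuousWithinAt.closure_le (by rw [closure_Ioo hlt.ne]; exact right_mem_Icc.2 hxy)
    (continuousWithinAt_const.edist hc) continuousWithinAt_const fun t ht => ?_
  exact (hbound t ht).trans (lintegral_mono_set (Icc_subset_Icc_right ht.2.le))

theorem edist_le_setLIntegral_of_forall_Ioo_right (hxy : x ≤ y)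
    (hc : ContinuousWithinAt c (Ioo x y) x)
    (hbound : ∀ t ∈ Ioo x y, edist (c t) (c y) ≤ ∫⁻ s in Icc t y, h s) :
    edist (c x) (c y) ≤ ∫⁻ s in Icc x y, h s := by
  rcases hxy.eq_or_lt with rfl | hlt
  · simp
  refine ContinuousWithinAt.closure_le (by rw [closure_Ioo hlt.ne]; exact left_mem_Icc.2 hxy)
    (hc.edist continuousWithinAt_const) continuousWithinAt_const fun t ht => ?_
  exact (hbound t ht).trans (lintegral_mono_set (Icc_subset_Icc_left ht.1.le))

theorem edist_le_setLIntegral_of_eq_off (hxy : x ≤ y) (hc : ContinuousOn c (Icc x y))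
    {O : Set ℝ} {z : E} (hz : ∀ t ∈ Icc x y, t ∉ O → c t = z)
    (hO : ∀ a b, x ≤ a → a < b → b ≤ y → Icc a b ⊆ O →
      edist (c a) (c b) ≤ ∫⁻ t in Icc a b, h t) :
    edist (c x) (c y) ≤ ∫⁻ t in Icc x y, h t := by
  set S := Icc x y \ O
  rcases S.eq_empty_or_nonempty with hS | hS
  · rcases hxy.eq_or_lt with rfl | hlt
    · simp
    · exact hO x y le_rfl hlt le_rfl (sdiff_eq_empty.1 hS)
  have hSxy : S ⊆ Icc x y := sdiff_subset
  have hSb : BddBelow S := bddBelow_Icc.mono hSxy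
  have hSa : BddAbove S := bddAbove_Icc.mono hSxy
  have hclosure : closure S ⊆ Icc x y := closure_minimal hSxy isClosed_Icc
  have hzero : ∀ s ∈ closure S, edist (c s) z ≤ 0 := fun s hs =>
    ContinuousWithinAt.closure_le hs
      (((hc s (hclosure hs)).mono hSxy).edist continuousWithinAt_const)
      continuousWithinAt_const fun t ht => by rw [hz t ht.1 ht.2, edist_self]
  have ha : sInf S ∈ closure S := csInf_mem_closure hS hSb
  have hb : sSup S ∈ closure S := csSup_mem_closure hS hSa
  set a := sInf S
  set b := sSup S
  obtain ⟨hxa, hay⟩ := hclosure ha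
  obtain ⟨hxb, hby⟩ := hclosure hb
  have hmem : ∀ s ∈ Icc x y, s ∉ O → a ≤ s ∧ s ≤ b := fun s hs hsO =>
    ⟨csInf_le hSb ⟨hs, hsO⟩, le_csSup hSa ⟨hs, hsO⟩⟩
  have hleft : edist (c x) (c a) ≤ ∫⁻ t in Icc x a, h t := by
    refine edist_le_setLIntegral_of_forall_Ioo_left hxa
      ((hc a ⟨hxa, hay⟩).mono (Ioo_subset_Icc_self.trans (Icc_subset_Icc_right hay)))
      fun t ht => hO x t le_rfl ht.1 (ht.2.le.trans hay) fun s hs => by_contra fun hsO => ?_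
    have has := (hmem s ⟨hs.1, hs.2.trans (ht.2.le.trans hay)⟩ hsO).1
    exact lt_irrefl a ((has.trans hs.2).trans_lt ht.2)
  have hright : edist (c b) (c y) ≤ ∫⁻ t in Icc b y, h t := by
    refine edist_le_setLIntegral_of_forall_Ioo_right hby
      ((hc b ⟨hxb, hby⟩).mono (Ioo_subset_Icc_self.trans (Icc_subset_Icc_left hxb)))
      fun t ht => hO t y (hxb.trans ht.1.le) ht.2 le_rfl fun s hs => by_contra fun hsO => ?_
    have hsb := (hmem s ⟨(hxb.trans ht.1.le).trans hs.1, hs.2⟩ hsO).2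
    exact lt_irrefl b ((ht.1.trans_le hs.1).trans_le hsb)
  have hcab : edist (c a) (c b) ≤ 0 := calc
    edist (c a) (c b) ≤ edist (c a) z + edist (c b) z := edist_triangle_right _ _ _
    _ ≤ 0 := by simpa using And.intro (hzero a ha) (hzero b hb)
  calc edist (c x) (c y) ≤ edist (c x) (c a) + edist (c a) (c b) + edist (c b) (c y) :=
        edist_triangle4 _ _ _ _
    _ ≤ (∫⁻ t in Icc x a, h t) + 0 + ∫⁻ t in Icc b y, h t := by gcongr
    _ ≤ (∫⁻ t in Icc x a, h t) + ∫⁻ t in Ioc a y, h t := by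
        rw [add_zero, Measure.restrict_congr_set Ioc_ae_eq_Icc]
        gcongr
        exact csInf_le_csSup hS hSb hSa
    _ = ∫⁻ t in Icc x y, h t := by
        rw [← lintegral_union measurableSet_Ioc
          ((Iic_disjoint_Ioi le_rfl).mono Icc_subset_Iic_self Ioc_subset_Ioi_self),
          Icc_union_Ioc_eq_Icc hxa hay]

end Interval

theorem IsWeakUpperGradientOn.indicator_of_aeCurve_continuousOn {X : Type*} [MetricSpace X]
    [MeasurableSpace X] {μ : Measure X} [SFinite μ] {p : ℝ} (hp : 0 < p) {U V : Set X}
    {u : X → ℝ} {g : X → ℝ≥0∞} (hzero : ∀ x ∈ V \ U, u x = 0)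
    (hcurve : AECurve (μ.restrict V) p fun γ : Curve X =>
      γ.InSet V → ContinuousOn (fun t => u (γ.toFun t)) (Icc 0 γ.len))
    (hg : IsWeakUpperGradientOn μ p u g U) : IsWeakUpperGradientOn μ p u (U.indicator g) V := by
  have hsub := (AECurve.of_restrict hp hg).restrictIcc.mono_measure (μ.restrict_le_self (s := V))
  refine (hcurve.and hsub).mono fun γ ⟨hcont, hsubγ⟩ hγV => ?_
  refine edist_le_setLIntegral_of_eq_off γ.len_pos.le (hcont hγV) (O := {t | γ.toFun t ∈ U})
    (fun t ht htU => hzero _ ⟨hγV t ht, htU⟩) fun a b h0 hab hb hU => ?_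
  rw [setLIntegral_congr_fun measurableSet_Icc fun t ht =>
    indicator_of_mem (show γ.toFun t ∈ U from hU ht) g]
  simpa using hsubγ a b h0 hab hb ((γ.inSet_restrictIcc h0 hab hb).2 hU)

theorem npEnergy_lt_top_iff {X : Type*} [MetricSpace X] [MeasurableSpace X] {μ : Measure X}
    {p : ℝ} {f : X → ℝ} {E : Set X} :
    npEnergy μ p f E < ⊤ ↔ (∫⁻ x in E, ENNReal.ofReal |f x| ^ p ∂μ) < ⊤ ∧
      ∃ g, Measurable g ∧ IsWeakUpperGradientOn μ p f g E ∧ ∫⁻ x in E, g x ^ p ∂μ < ⊤ := by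
  simp only [npEnergy, ENNReal.add_lt_top, iInf_lt_iff, exists_prop]

theorem DoublingMeasure.sigmaFinite {X : Type*} [MetricSpace X] [MeasurableSpace X]
    {μ : Measure X} (hd : DoublingMeasure μ) : SigmaFinite μ := by
  rcases isEmpty_or_nonempty X with hX | ⟨⟨x₀⟩⟩
  · rw [Measure.eq_zero_of_isEmpty μ]
    infer_instance
  · exact ⟨⟨⟨fun n => ball x₀ (n + 1), fun _ => trivial,
      fun n => (hd.1 x₀ (n + 1) n.cast_add_one_pos).2, iUnion_ball_nat_succ x₀⟩⟩⟩

theorem memNp_of_curvewise_continuity_general {X : Type*} [MetricSpace X] [MeasurableSpace X]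
    (μ : Measure X) (p : ℝ) (hp : 1 < p) (hd : DoublingMeasure μ)
    (U V : Set X) (u : X → ℝ) (hu : MemNp μ p u U)
    (hzero : ∀ x ∈ V \ U, u x = 0) (hmeas : Measurable u)
    (hcurve : AECurve (μ.restrict V) p (fun γ : Curve X =>
      γ.InSet V → ContinuousOn (fun t => u (γ.toFun t)) (Set.Icc 0 γ.len))) :
    MemNp μ p u V ∧
      ∀ g : X → ℝ≥0∞, Measurable g → IsWeakUpperGradientOn μ p u g U →
        (∫⁻ x in U, g x ^ p ∂μ) < ⊤ →
        IsWeakUpperGradientOn μ p u (U.indicator g) V := by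
  have := hd.sigmaFinite
  have hp0 : 0 < p := zero_lt_one.trans hp
  have hextend {g : X → ℝ≥0∞} (hg : IsWeakUpperGradientOn μ p u g U) :=
    hg.indicator_of_aeCurve_continuousOn hp0 hzero hcurve
  obtain ⟨hu_Lp, g, hgm, hg, hg_Lp⟩ := npEnergy_lt_top_iff.1 hu.2
  set U' := toMeasurable μ U
  refine ⟨⟨hmeas, npEnergy_lt_top_iff.2 ⟨?_, U'.indicator g,
    hgm.indicator (measurableSet_toMeasurable μ U), ?_, ?_⟩⟩, fun _ _ hg _ => hextend hg⟩
  · refine (setLIntegral_rpow_le_of_eq_zero_off hp0 hmeas.abs.ennreal_ofReal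
      fun x hx => ?_).trans_lt hu_Lp
    simp [hzero x hx]
  · exact (hextend hg).mono (indicator_le_indicator_of_subset (subset_toMeasurable μ U) zero_le)
  · exact (setLIntegral_le_lintegral V _).trans_lt
      ((lintegral_indicator_toMeasurable_rpow hp0 U g).trans_lt hg_Lp)

/-- if `u ∈ N^{1,p}(U)` is extended by zero to `V \ U`, is
measurable and `u ∘ γ` is continuous for `p`-a.e. curve `γ` in `V`, then
`u ∈ N^{1,p}(V)` and any `p`-weak upper gradient `g ∈ L^p(U)` of `u` in `U`,
extended by zero, is a `p`-weak upper gradient of `u` in `V`. -/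
theorem memNp_of_curvewise_continuity {X : Type*} [MetricSpace X]
    [CompleteSpace X] [MeasurableSpace X] [BorelSpace X]
    (μ : Measure X) (p : ℝ) (hp : 1 < p)
    (hd : DoublingMeasure μ) (hPI : PoincareInequality μ p)
    (U V : Set X) (hU : FinelyOpen μ p U) (hV : FinelyOpen μ p V)
    (hUV : U ⊆ V) (u : X → ℝ) (hu : MemNp μ p u U)
    (hzero : ∀ x ∈ V \ U, u x = 0) (hmeas : Measurable u)
    (hcurve : AECurve (μ.restrict V) p (fun γ : Curve X =>
      γ.InSet V → ContinuousOn (fun t => u (γ.toFun t)) (Set.Icc 0 γ.len))) :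
    MemNp μ p u V ∧
      ∀ g : X → ℝ≥0∞, Measurable g → IsWeakUpperGradientOn μ p u g U →
        (∫⁻ x in U, g x ^ p ∂μ) < ⊤ →
        IsWeakUpperGradientOn μ p u (U.indicator g) V :=
  memNp_of_curvewise_continuity_general μ p hp hd U V u hu hzero hmeas hcurve
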